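/- Let (Ω,𝒜,μ) be a σ-finite measure space, 1 ≤ p < ∞, and let (B_n)_{n∈ℕ} be pairwise disjoint measurable sets with Ω = ⋃_{n∈ℕ} B_n, where each B_n is either an atom of μ or a μ-null set. Let u ∈ L∞(μ) and for each n let c_n be a scalar with u = c_n a.e. on B_n, with c_n := 0 whenever μ(B_n) = 0. Then the essential norm of the multiplication operator M_u on L_p(μ) equals limsup_{n→∞} |c_n|. -/

import Mathlib

/-!
Cut `u` at a stage `N`. On each of the finitely many atoms `B 0, …, B (N - 1)` every `L_p`
function is a.e. constant, so multiplication by `u` on their union has finite rank; off it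
`‖u‖ ≤ sup_{n ≥ N} ‖c n‖`. Hence `‖M_u‖_e ≤ limsup ‖c n‖`.

Conversely, if `‖c n‖ > b` for infinitely many `n`, the normalized indicators of these `B n` are
unit vectors at mutual distance `≥ 1` whose differences `M_u` stretches by at least `b`. A compact
`K` is almost constant along a subsequence of them, so `‖M_u + K‖ ≥ b`.
-/

open MeasureTheory Filter ENNReal

/-- A measurable set `B` is an atom of `μ`. -/
def IsAtomSet {Ω : Type*} [MeasurableSpace Ω] (μ : Measure Ω) (B : Set Ω) : Prop :=
  MeasurableSet B ∧ 0 < μ B ∧ ∀ B' ⊆ B, MeasurableSet B' → μ B' = 0 ∨ μ B' = μ B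

section Restrict

variable {Ω : Type*} [MeasurableSpace Ω] {μ : Measure Ω} {B : Set Ω}

theorem IsAtomSet.measure_ne_top [SigmaFinite μ] (hB : IsAtomSet μ B) : μ B ≠ ∞ := by
  obtain ⟨t, ht, htB, ht0, ht_top⟩ := Measure.exists_subset_measure_lt_top hB.1 hB.2.1
  rcases hB.2.2 t htB ht with h | h
  · exact absurd h ht0.ne'
  · exact h ▸ ht_top.ne

theorem IsAtomSet.ae_restrict_mem_or_ae_restrict_notMem (hB : IsAtomSet μ B) (hfin : μ B ≠ ∞)
    {s : Set Ω} (hs : MeasurableSet s) :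
    (∀ᵐ x ∂μ.restrict B, x ∈ s) ∨ ∀ᵐ x ∂μ.restrict B, x ∉ s := by
  simp only [ae_iff, not_not, Measure.restrict_apply' hB.1, Set.ofPred_mem_eq,
    ← Set.compl_def, Set.inter_comm _ B, ← Set.sdiff_eq]
  rcases hB.2.2 (B ∩ s) Set.inter_subset_left (hB.1.inter hs) with h | h
  · exact .inr h
  · refine .inl ((ENNReal.add_right_inj hfin).1 ?_)
    rw [add_zero, ← h, measure_inter_add_sdiff _ hs, h]

theorem IsAtomSet.exists_ae_restrict_eq_const {X : Type*} [MeasurableSpace X] [Nonempty X]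
    [MeasurableSpace.CountablySeparated X] (hB : IsAtomSet μ B) (hfin : μ B ≠ ∞) {f : Ω → X}
    (hf : AEMeasurable f (μ.restrict B)) : ∃ a, f =ᵐ[μ.restrict B] fun _ => a := by
  obtain ⟨a, ha⟩ := exists_eventuallyEq_const_of_forall_separating (f := hf.mk f)
    (l := ae (μ.restrict B)) MeasurableSet fun U hU =>
      hB.ae_restrict_mem_or_ae_restrict_notMem hfin (hf.measurable_mk hU)
  exact ⟨a, hf.ae_eq_mk.trans ha⟩

theorem norm_le_lpNorm_top_of_ae_restrict_eq {E : Type*} [NormedAddCommGroup E] {u : Ω → E}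
    (hu : MemLp u ∞ μ) {a : E} (hB : μ B ≠ 0) (hua : ∀ᵐ x ∂μ.restrict B, u x = a) :
    ‖a‖ ≤ lpNorm u ∞ μ := by
  have : (ae (μ.restrict B)).NeBot := ae_neBot.2 (by simpa using hB)
  obtain ⟨x, hx, hux⟩ := (hua.and (ae_restrict_of_ae (ae_le_lpNorm_exponent_top hu))).exists
  exact hx ▸ hux

end Restrict

section CompactOperator

variable {𝕜 E F : Type*} [NontriviallyNormedField 𝕜] [NormedAddCommGroup E] [NormedSpace 𝕜 E]
  [NormedAddCommGroup F] [NormedSpace 𝕜 F]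

theorem isCompactOperator_of_forall_mem [ProperSpace 𝕜] {T : E →L[𝕜] F} (W : Submodule 𝕜 F)
    [FiniteDimensional 𝕜 W] (hT : ∀ x, T x ∈ W) : IsCompactOperator T :=
  have := FiniteDimensional.proper 𝕜 W
  (isCompactOperator_of_locallyCompactSpace_dom (T.codRestrict W hT)).clm_comp W.subtypeL

theorem IsCompactOperator.exists_ne_norm_apply_sub_lt {K : E →L[𝕜] F}
    (hK : IsCompactOperator K) {e : ℕ → E} {R : ℝ} (he : ∀ k, ‖e k‖ ≤ R) {δ : ℝ} (hδ : 0 < δ) :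
    ∃ k l, k ≠ l ∧ ‖K (e k - e l)‖ < δ := by
  obtain ⟨C, hC, hKC⟩ := hK.image_closedBall_subset_compact R
  obtain ⟨z, -, φ, hφ, hlim⟩ := hC.tendsto_subseq fun k =>
    hKC ⟨e k, mem_closedBall_zero_iff.2 (he k), rfl⟩
  obtain ⟨N, hN⟩ := Metric.cauchySeq_iff'.1 hlim.cauchySeq δ hδ
  refine ⟨φ (N + 1), φ N, (hφ N.lt_succ_self).ne', ?_⟩
  simpa [map_sub, dist_eq_norm] using hN (N + 1) N.le_succ

theorem le_opNorm_add_of_isCompactOperator {T K : E →L[𝕜] F} (hK : IsCompactOperator K)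
    {e : ℕ → E} (he : ∀ k, ‖e k‖ ≤ 1) (hsep : ∀ k l, k ≠ l → 1 ≤ ‖e k - e l‖) {b : ℝ}
    (hT : ∀ k l, k ≠ l → b * ‖e k - e l‖ ≤ ‖T (e k - e l)‖) : b ≤ ‖T + K‖ := by
  refine le_of_forall_pos_le_add fun δ hδ => ?_
  obtain ⟨k, l, hkl, hsmall⟩ := hK.exists_ne_norm_apply_sub_lt he hδ
  set d := e k - e l
  have hd : 1 ≤ ‖d‖ := hsep k l hkl
  have : b * ‖d‖ ≤ (‖T + K‖ + δ) * ‖d‖ :=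
    calc b * ‖d‖ ≤ ‖T d‖ := hT k l hkl
      _ = ‖(T + K) d - K d‖ := by simp
      _ ≤ ‖T + K‖ * ‖d‖ + δ :=
        (norm_sub_le _ _).trans (add_le_add ((T + K).le_opNorm d) hsmall.le)
      _ ≤ (‖T + K‖ + δ) * ‖d‖ := by nlinarith
  exact le_of_mul_le_mul_right this (by linarith)

end CompactOperator

section Lp

variable {Ω 𝕜 : Type*} [MeasurableSpace Ω] {μ : Measure Ω} [RCLike 𝕜] {p : ℝ≥0∞}

theorem Lp.mem_span_indicatorConstLp {ι : Type*} (s : Finset ι) {B : ι → Set Ω}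
    (hBm : ∀ i, MeasurableSet (B i)) (hBfin : ∀ i, μ (B i) ≠ ∞)
    (hdisj : Pairwise (Function.onFun Disjoint B)) {g : Lp 𝕜 p μ}
    (hconst : ∀ i ∈ s, ∃ a, g =ᵐ[μ.restrict (B i)] fun _ => a)
    (hzero : ∀ᵐ x ∂μ, x ∉ ⋃ i ∈ s, B i → g x = 0) :
    g ∈ Submodule.span 𝕜 ((fun i => indicatorConstLp p (hBm i) (hBfin i) (1 : 𝕜)) '' s) := by
  classical
  choose! a ha using hconst
  have hg : g = ∑ i ∈ s, a i • indicatorConstLp p (hBm i) (hBfin i) (1 : 𝕜) := by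
    have hmem : ∀ i ∈ s, ∀ᵐ x ∂μ, x ∈ B i → g x = a i := fun i hi =>
      (ae_restrict_iff' (hBm i)).1 (ha i hi)
    refine Lp.ext ?_
    filter_upwards [(eventually_all_finset s).2 hmem, hzero,
      Lp.coeFn_fun_finsetSum s fun i => a i • indicatorConstLp p (hBm i) (hBfin i) (1 : 𝕜),
      (eventually_all_finset s).2 fun i _ =>
        Lp.coeFn_smul (a i) (indicatorConstLp p (hBm i) (hBfin i) (1 : 𝕜)),
      (eventually_all_finset s).2 fun i _ =>
        indicatorConstLp_coeFn (hs := hBm i) (hμs := hBfin i) (p := p) (c := (1 : 𝕜))]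
      with x hxmem hxzero hsum hsmul hind
    rw [hsum, Finset.sum_congr rfl fun i hi => by rw [hsmul i hi, Pi.smul_apply, hind i hi]]
    simp only [smul_eq_mul]
    by_cases hx : ∃ i ∈ s, x ∈ B i
    · obtain ⟨i, hi, hxi⟩ := hx
      rw [hxmem i hi hxi, Finset.sum_eq_single_of_mem i hi, Set.indicator_of_mem hxi, mul_one]
      intro j _ hji
      rw [Set.indicator_of_notMem (Set.disjoint_left.1 (hdisj hji.symm) hxi), mul_zero]
    · simp only [not_exists, not_and] at hx
      rw [hxzero (by simpa using hx), Finset.sum_eq_zero]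
      intro i hi
      rw [Set.indicator_of_notMem (hx i hi), mul_zero]
  rw [hg]
  exact Submodule.sum_mem _ fun i hi =>
    Submodule.smul_mem _ _ (Submodule.subset_span (Set.mem_image_of_mem _ hi))

variable [Fact (1 ≤ p)]

def IsMultiplicationOperator (T : Lp 𝕜 p μ →L[𝕜] Lp 𝕜 p μ) (u : Ω → 𝕜) : Prop :=
  ∀ f : Lp 𝕜 p μ, T f =ᵐ[μ] fun x => u x * f x

theorem exists_isMultiplicationOperator {u : Ω → 𝕜} (hu : MemLp u ∞ μ) :
    ∃ T : Lp 𝕜 p μ →L[𝕜] Lp 𝕜 p μ, IsMultiplicationOperator T u :=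
  ⟨(ContinuousLinearMap.mul 𝕜 𝕜).holderL μ ∞ p p (hu.toLp u), fun f => by
    filter_upwards [(ContinuousLinearMap.mul 𝕜 𝕜).coeFn_holder (r := p) (hu.toLp u) f,
      hu.coeFn_toLp] with x hx hux
    simp [hx, hux]⟩

namespace IsMultiplicationOperator

variable {T S : Lp 𝕜 p μ →L[𝕜] Lp 𝕜 p μ} {u v : Ω → 𝕜}

theorem sub (hT : IsMultiplicationOperator T u) (hS : IsMultiplicationOperator S v) :
    IsMultiplicationOperator (T - S) (u - v) := fun f => by
  filter_upwards [Lp.coeFn_sub (T f) (S f), hT f, hS f] with x hx hTx hSx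
  rw [sub_apply, hx, Pi.sub_apply, hTx, hSx, Pi.sub_apply, sub_mul]

theorem opNorm_le (hT : IsMultiplicationOperator T u) {C : ℝ} (hC : 0 ≤ C)
    (hu : ∀ᵐ x ∂μ, ‖u x‖ ≤ C) : ‖T‖ ≤ C :=
  T.opNorm_le_bound hC fun f => Lp.norm_le_mul_norm_of_ae_le_mul <| by
    filter_upwards [hT f, hu] with x hx hux
    rw [hx, norm_mul]
    exact mul_le_mul_of_nonneg_right hux (norm_nonneg _)

theorem mul_norm_le_norm_apply (hT : IsMultiplicationOperator T u) {b : ℝ} (hb : 0 ≤ b)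
    {f : Lp 𝕜 p μ} (hu : ∀ᵐ x ∂μ, f x ≠ 0 → b ≤ ‖u x‖) : b * ‖f‖ ≤ ‖T f‖ := by
  have : ‖b • f‖ ≤ ‖T f‖ := Lp.norm_le_norm_of_ae_le <| by
    filter_upwards [Lp.coeFn_smul b f, hT f, hu] with x hx hTx hux
    rw [hx, hTx, Pi.smul_apply, norm_smul, Real.norm_of_nonneg hb, norm_mul]
    by_cases hfx : f x = 0
    · simp [hfx]
    · exact mul_le_mul_of_nonneg_right (hux hfx) (norm_nonneg _)
  rwa [norm_smul, Real.norm_of_nonneg hb] at this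

theorem isCompactOperator_of_ae_eq_zero_off_atoms (hS : IsMultiplicationOperator S v)
    {ι : Type*} (s : Finset ι) {B : ι → Set Ω} (hBm : ∀ i, MeasurableSet (B i))
    (hBfin : ∀ i, μ (B i) ≠ ∞) (hdisj : Pairwise (Function.onFun Disjoint B))
    (hB : ∀ i ∈ s, IsAtomSet μ (B i) ∨ μ (B i) = 0)
    (hv : ∀ᵐ x ∂μ, x ∉ ⋃ i ∈ s, B i → v x = 0) : IsCompactOperator S := by
  have := FiniteDimensional.span_of_finite 𝕜
    (s.finite_toSet.image fun i => indicatorConstLp p (hBm i) (hBfin i) (1 : 𝕜))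
  refine isCompactOperator_of_forall_mem _ fun f =>
    Lp.mem_span_indicatorConstLp s hBm hBfin hdisj (fun i hi => ?_) ?_
  · rcases hB i hi with hBi | hBi
    · exact hBi.exists_ae_restrict_eq_const (hBfin i)
        (Lp.aestronglyMeasurable _).aemeasurable.restrict
    · exact ⟨0, by rw [Measure.restrict_eq_zero.2 hBi, ae_zero]; exact eventually_bot⟩
  · filter_upwards [hS f, hv] with x hx hvx hxs
    rw [hx, hvx hxs, zero_mul]

theorem exists_isCompactOperator_opNorm_add_le (hT : IsMultiplicationOperator T u)
    (hu : MemLp u ∞ μ) {ι : Type*} (s : Finset ι) {B : ι → Set Ω}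
    (hBm : ∀ i, MeasurableSet (B i)) (hBfin : ∀ i, μ (B i) ≠ ∞)
    (hdisj : Pairwise (Function.onFun Disjoint B))
    (hB : ∀ i ∈ s, IsAtomSet μ (B i) ∨ μ (B i) = 0) {C : ℝ} (hC : 0 ≤ C)
    (huC : ∀ᵐ x ∂μ, x ∉ ⋃ i ∈ s, B i → ‖u x‖ ≤ C) :
    ∃ K : Lp 𝕜 p μ →L[𝕜] Lp 𝕜 p μ, IsCompactOperator K ∧ ‖T + K‖ ≤ C := by
  have hH : MeasurableSet (⋃ i ∈ s, B i) := Finset.measurableSet_biUnion s fun i _ => hBm i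
  have huH : MemLp ((⋃ i ∈ s, B i).indicator u) ∞ μ := hu.indicator hH
  obtain ⟨S, hS⟩ := exists_isMultiplicationOperator (p := p) huH
  have hScomp : IsCompactOperator S := hS.isCompactOperator_of_ae_eq_zero_off_atoms s hBm
    hBfin hdisj hB (.of_forall fun x hx => Set.indicator_of_notMem hx u)
  refine ⟨-S, hScomp.neg, ?_⟩
  rw [← sub_eq_add_neg]
  refine (hT.sub hS).opNorm_le hC ?_
  filter_upwards [huC] with x hx
  rw [Pi.sub_apply, ← Pi.sub_apply, ← Set.indicator_compl]
  by_cases hxH : x ∈ ⋃ i ∈ s, B i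
  · rw [Set.indicator_of_notMem (Set.notMem_compl_iff.2 hxH), norm_zero]
    exact hC
  · rw [Set.indicator_of_mem hxH]
    exact hx hxH

theorem le_opNorm_add_of_isCompactOperator (hT : IsMultiplicationOperator T u)
    {K : Lp 𝕜 p μ →L[𝕜] Lp 𝕜 p μ} (hK : IsCompactOperator K) {B : ℕ → Set Ω}
    (hBm : ∀ n, MeasurableSet (B n)) (hBfin : ∀ n, μ (B n) ≠ ∞) (hB0 : ∀ n, μ (B n) ≠ 0)
    (hdisj : Pairwise (Function.onFun Disjoint B)) {b : ℝ} (hb : 0 ≤ b)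
    (hub : ∀ n, ∀ᵐ x ∂μ.restrict (B n), b ≤ ‖u x‖) : b ≤ ‖T + K‖ := by
  set χ : ℕ → Lp 𝕜 p μ := fun n => indicatorConstLp p (hBm n) (hBfin n) 1
  have hχ : ∀ n, χ n ≠ 0 := fun n => by
    have hp0 : p ≠ 0 := (zero_lt_one.trans_le Fact.out).ne'
    rw [← norm_ne_zero_iff, norm_indicatorConstLp' hp0 (hB0 n), norm_one, one_mul]
    exact (Real.rpow_pos_of_pos (ENNReal.toReal_pos (hB0 n) (hBfin n)) _).ne'
  set e : ℕ → Lp 𝕜 p μ := fun n => ((‖χ n‖ : 𝕜)⁻¹ • χ n)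
  have he : ∀ n, ‖e n‖ = 1 := fun n => norm_smul_inv_norm (hχ n)
  have hsupp : ∀ n, ∀ᵐ x ∂μ, x ∉ B n → e n x = 0 := fun n => by
    filter_upwards [Lp.coeFn_smul (‖χ n‖ : 𝕜)⁻¹ (χ n),
      indicatorConstLp_coeFn_notMem (p := p) (hs := hBm n) (hμs := hBfin n) (c := (1 : 𝕜))]
      with x hx hχx hxB
    rw [hx, Pi.smul_apply, hχx hxB, smul_zero]
  have hub' : ∀ n, ∀ᵐ x ∂μ, x ∈ B n → b ≤ ‖u x‖ := fun n =>
    (ae_restrict_iff' (hBm n)).1 (hub n)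
  refine _root_.le_opNorm_add_of_isCompactOperator hK (fun k => (he k).le)
    (fun k l hkl => ?_) (fun k l hkl => hT.mul_norm_le_norm_apply hb ?_)
  · refine (he k).ge.trans (Lp.norm_le_norm_of_ae_le ?_)
    filter_upwards [Lp.coeFn_sub (e k) (e l), hsupp k, hsupp l] with x hx hk hl
    by_cases hxk : x ∈ B k
    · rw [hx, Pi.sub_apply, hl (Set.disjoint_left.1 (hdisj hkl) hxk), sub_zero]
    · rw [hk hxk, norm_zero]
      exact norm_nonneg _
  · filter_upwards [Lp.coeFn_sub (e k) (e l), hsupp k, hsupp l, hub' k, hub' l]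
      with x hx hk hl huk hul hne
    by_cases hxk : x ∈ B k
    · exact huk hxk
    by_cases hxl : x ∈ B l
    · exact hul hxl
    rw [hx, Pi.sub_apply, hk hxk, hl hxl, sub_zero] at hne
    exact (hne rfl).elim

theorem exists_isCompactOperator_opNorm_add_le_of_eventually_le
    (hT : IsMultiplicationOperator T u) (hu : MemLp u ∞ μ) {B : ℕ → Set Ω}
    (hBm : ∀ n, MeasurableSet (B n)) (hBfin : ∀ n, μ (B n) ≠ ∞)
    (hdisj : Pairwise (Function.onFun Disjoint B)) (hBunion : ⋃ n, B n = Set.univ)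
    (hB : ∀ n, IsAtomSet μ (B n) ∨ μ (B n) = 0) {c : ℕ → 𝕜}
    (hc : ∀ n, ∀ᵐ x ∂μ.restrict (B n), u x = c n) {C : ℝ}
    (hcC : ∀ᶠ n in atTop, ‖c n‖ ≤ C) :
    ∃ K : Lp 𝕜 p μ →L[𝕜] Lp 𝕜 p μ, IsCompactOperator K ∧ ‖T + K‖ ≤ C := by
  obtain ⟨N, hN⟩ := eventually_atTop.1 hcC
  refine hT.exists_isCompactOperator_opNorm_add_le hu (Finset.range N) hBm hBfin hdisj
    (fun n _ => hB n) ((norm_nonneg _).trans (hN N le_rfl)) ?_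
  filter_upwards [ae_all_iff.2 fun n => (ae_restrict_iff' (hBm n)).1 (hc n)] with x hx hxN
  obtain ⟨n, hn⟩ := Set.mem_iUnion.1 (hBunion ▸ Set.mem_univ x)
  have hNn : N ≤ n := not_lt.1 fun h => hxN (Set.mem_biUnion (Finset.mem_range.2 h) hn)
  rw [hx n hn]
  exact hN n hNn

theorem le_opNorm_add_of_frequently_lt (hT : IsMultiplicationOperator T u)
    {K : Lp 𝕜 p μ →L[𝕜] Lp 𝕜 p μ} (hK : IsCompactOperator K) {B : ℕ → Set Ω}
    (hBm : ∀ n, MeasurableSet (B n)) (hBfin : ∀ n, μ (B n) ≠ ∞)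
    (hdisj : Pairwise (Function.onFun Disjoint B)) {c : ℕ → 𝕜}
    (hc : ∀ n, ∀ᵐ x ∂μ.restrict (B n), u x = c n) (hc0 : ∀ n, μ (B n) = 0 → c n = 0)
    {b : ℝ} (hbc : ∃ᶠ n in atTop, b < ‖c n‖) : b ≤ ‖T + K‖ := by
  rcases le_or_gt b 0 with hb0 | hb0
  · exact hb0.trans (norm_nonneg _)
  set σ := (Nat.frequently_atTop_iff_infinite.1 hbc).natEmbedding
  have hσ : ∀ k, b < ‖c (σ k)‖ := fun k => (σ k).2
  refine hT.le_opNorm_add_of_isCompactOperator hK (B := fun k => B (σ k)) (fun k => hBm _)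
    (fun k => hBfin _) (fun k h => ?_)
    (hdisj.comp_of_injective (Subtype.val_injective.comp σ.injective)) hb0.le fun k => ?_
  · have hσk := hσ k
    rw [hc0 _ h, norm_zero] at hσk
    exact hb0.not_gt hσk
  · filter_upwards [hc (σ k)] with x hx
    rw [hx]
    exact (hσ k).le

end IsMultiplicationOperator

end Lp

theorem stmt2_general {Ω : Type*} [MeasurableSpace Ω] {𝕜 : Type*} [RCLike 𝕜]
    (μ : Measure Ω) [SigmaFinite μ]
    (p : ℝ≥0∞) [Fact (1 ≤ p)]
    (B : ℕ → Set Ω) (hBmeas : ∀ n, MeasurableSet (B n))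
    (hBdisj : Pairwise (Function.onFun Disjoint B)) (hBunion : (⋃ n, B n) = Set.univ)
    (hBatom : ∀ n, IsAtomSet μ (B n) ∨ μ (B n) = 0)
    (u : Ω → 𝕜) (hu : MemLp u ∞ μ)
    (c : ℕ → 𝕜) (hc : ∀ n, ∀ᵐ x ∂μ.restrict (B n), u x = c n)
    (hc0 : ∀ n, μ (B n) = 0 → c n = 0)
    (Mu : Lp 𝕜 p μ →L[𝕜] Lp 𝕜 p μ)
    (hMu : ∀ f : Lp 𝕜 p μ, (Mu f : Ω → 𝕜) =ᵐ[μ] fun x => u x * f x) :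
    sInf {r : ℝ | ∃ K : Lp 𝕜 p μ →L[𝕜] Lp 𝕜 p μ, IsCompactOperator K ∧ r = ‖Mu + K‖}
      = Filter.limsup (fun n => ‖c n‖) Filter.atTop := by
  have hMu' : IsMultiplicationOperator Mu u := hMu
  have hfin : ∀ n, μ (B n) ≠ ∞ := fun n =>
    (hBatom n).elim IsAtomSet.measure_ne_top fun h => h ▸ zero_ne_top
  have hbdd : IsBoundedUnder (· ≤ ·) atTop fun n => ‖c n‖ := isBoundedUnder_of
    ⟨lpNorm u ∞ μ, fun n => (eq_or_ne (μ (B n)) 0).elim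
      (fun h => by simp [hc0 n h, lpNorm_nonneg])
      (fun h => norm_le_lpNorm_top_of_ae_restrict_eq hu h (hc n))⟩
  apply le_antisymm
  · refine le_of_forall_pos_le_add fun ε hε => ?_
    obtain ⟨K, hK, hKle⟩ := hMu'.exists_isCompactOperator_opNorm_add_le_of_eventually_le hu
      hBmeas hfin hBdisj hBunion hBatom hc
      ((eventually_lt_of_limsup_lt (lt_add_of_pos_right _ hε) hbdd).mono fun _ => le_of_lt)
    refine le_trans (csInf_le ⟨0, ?_⟩ ⟨K, hK, rfl⟩) hKle
    rintro _ ⟨K', -, rfl⟩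
    exact norm_nonneg _
  · refine le_csInf ⟨‖Mu‖, 0, isCompactOperator_zero, by simp⟩ ?_
    rintro _ ⟨K, hK, rfl⟩
    have hcobdd : IsCoboundedUnder (· ≤ ·) atTop fun n => ‖c n‖ :=
      isCoboundedUnder_le_of_le atTop fun n => norm_nonneg _
    exact le_of_forall_lt_imp_le_of_dense fun b hb => hMu'.le_opNorm_add_of_frequently_lt hK
      hBmeas hfin hBdisj hc hc0 (frequently_lt_of_lt_limsup hcobdd hb)

theorem stmt2 {Ω : Type*} [MeasurableSpace Ω] {𝕜 : Type*} [RCLike 𝕜]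
    (μ : Measure Ω) [SigmaFinite μ]
    (p : ℝ≥0∞) [Fact (1 ≤ p)] (hp : p ≠ ∞)
    (B : ℕ → Set Ω) (hBmeas : ∀ n, MeasurableSet (B n))
    (hBdisj : Pairwise (Function.onFun Disjoint B)) (hBunion : (⋃ n, B n) = Set.univ)
    (hBatom : ∀ n, IsAtomSet μ (B n) ∨ μ (B n) = 0)
    (u : Ω → 𝕜) (hu : MemLp u ∞ μ)
    (c : ℕ → 𝕜) (hc : ∀ n, ∀ᵐ x ∂μ.restrict (B n), u x = c n)
    (hc0 : ∀ n, μ (B n) = 0 → c n = 0)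
    (Mu : Lp 𝕜 p μ →L[𝕜] Lp 𝕜 p μ)
    (hMu : ∀ f : Lp 𝕜 p μ, (Mu f : Ω → 𝕜) =ᵐ[μ] fun x => u x * f x) :
    sInf {r : ℝ | ∃ K : Lp 𝕜 p μ →L[𝕜] Lp 𝕜 p μ, IsCompactOperator K ∧ r = ‖Mu + K‖}
      = Filter.limsup (fun n => ‖c n‖) Filter.atTop :=
  stmt2_general μ p B hBmeas hBdisj hBunion hBatom u hu c hc hc0 Mu hMu
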